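/- Let T1 + iT2 = a_0 E_{k,1} + ∑_{i=1}^{k-1} a_i E_{i,i+1} and 2iT3 = ∑_{i=1}^k b_i E_{i,i} with a_i, b_i ∈ ℝ, all a_i ≠ 0, satisfying a_i² = a_{k-i}² (1 ≤ i ≤ k-1) and b_i + b_{k+1-i} = 0 (1 ≤ i ≤ k). Then there exists a constant matrix C ∈ SU(k), antidiagonal of the form C = ∑_{i=1}^k v_i E_{i,k+1-i}, such that C T1 C⁻¹ = -T1, C T2 C⁻¹ = T2, C T3 C⁻¹ = -T3; i.e., the Nahm data (T1, T2, T3) is invariant under the rotation diag(-1, 1, -1) implemented by conjugation by C. -/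
import Mathlib


open Matrix

noncomputable def myW (k : ℕ) (a : ℕ → ℝ) : ℕ → ℝ :=
  fun i => ∏ j ∈ Finset.Icc 1 i, a j / a (k - j)

noncomputable def myC0 (k : ℕ) (a : ℕ → ℝ) : Matrix (Fin k) (Fin k) ℝ :=
  Matrix.of fun i j => if (j : ℕ) = k - 1 - (i : ℕ) then myW k a (i : ℕ) else 0

lemma myW_zero (k : ℕ) (a : ℕ → ℝ) : myW k a 0 = 1 := by simp [myW]

lemma myW_sq (k : ℕ) (a : ℕ → ℝ)
    (hnz : ∀ i : ℕ, i ≤ k - 1 → a i ≠ 0)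
    (ha : ∀ i : ℕ, 1 ≤ i → i ≤ k - 1 → (a i) ^ 2 = (a (k - i)) ^ 2)
    (i : ℕ) (hi : i ≤ k - 1) : myW k a i * myW k a i = 1 := by
  rw [myW, ← Finset.prod_mul_distrib]
  apply Finset.prod_eq_one
  intro j hj
  simp only [Finset.mem_Icc] at hj
  rw [div_mul_div_comm, ← sq, ← sq, ha j hj.1 (le_trans hj.2 hi)]
  exact div_self (pow_ne_zero _ (hnz _ (by omega)))

lemma myW_rec (k : ℕ) (a : ℕ → ℝ)
    (hnz : ∀ i : ℕ, i ≤ k - 1 → a i ≠ 0)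
    (i : ℕ) (h1 : 1 ≤ i) (h2 : i ≤ k - 1) :
    myW k a i * a (k - i) = a i * myW k a (i - 1) := by
  obtain ⟨m, rfl⟩ := Nat.exists_eq_add_of_le h1
  have h : myW k a (1 + m) = myW k a m * (a (m + 1) / a (k - (m + 1))) := by
    rw [show 1 + m = m + 1 by omega, myW]
    exact Finset.prod_Icc_succ_top (by omega) _
  rw [h, show 1 + m - 1 = m by omega, show (1 + m) = m + 1 by omega]
  rw [mul_assoc, div_mul_cancel₀ _ (hnz _ (by omega))]
  ring

lemma myW_top (k : ℕ) (a : ℕ → ℝ)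
    (hnz : ∀ i : ℕ, i ≤ k - 1 → a i ≠ 0) : myW k a (k - 1) = 1 := by
  rw [myW, Finset.prod_div_distrib]
  have h2 : ∏ j ∈ Finset.Icc 1 (k - 1), a (k - j) = ∏ j ∈ Finset.Icc 1 (k - 1), a j := by
    apply Finset.prod_nbij' (fun j => k - j) (fun j => k - j) <;>
      intro j hj <;> simp only [Finset.mem_Icc] at * <;> first | omega | rfl
  rw [h2, div_self]
  exact Finset.prod_ne_zero_iff.2 fun j hj => hnz j (by simp only [Finset.mem_Icc] at hj; omega)

lemma myC0_apply (k : ℕ) (a : ℕ → ℝ) (i j : Fin k) :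
    myC0 k a i j = if j = i.rev then myW k a (i : ℕ) else 0 := by
  have h : ((j : ℕ) = k - 1 - (i : ℕ)) ↔ (j = i.rev) := by
    rw [Fin.ext_iff, Fin.val_rev]; omega
  rw [myC0, Matrix.of_apply]
  simp only [h]

lemma myC0_apply' (k : ℕ) (a : ℕ → ℝ) (i j : Fin k) :
    myC0 k a i j = if i = j.rev then myW k a (i : ℕ) else 0 := by
  have h : (j = i.rev) ↔ (i = j.rev) := by
    rw [Fin.ext_iff, Fin.ext_iff, Fin.val_rev, Fin.val_rev]; omega
  rw [myC0_apply]
  simp only [h]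

/-- The real version of sutcliffeB. -/
def myB (k : ℕ) (a : ℕ → ℝ) : Matrix (Fin k) (Fin k) ℝ :=
  Matrix.of fun i j =>
    (if (i : ℕ) = k - 1 ∧ (j : ℕ) = 0 then a 0 else 0) +
    (if (j : ℕ) = (i : ℕ) + 1 then a ((i : ℕ) + 1) else 0)


lemma myOrtho (k : ℕ) (a : ℕ → ℝ)
    (hnz : ∀ i : ℕ, i ≤ k - 1 → a i ≠ 0)
    (ha : ∀ i : ℕ, 1 ≤ i → i ≤ k - 1 → (a i) ^ 2 = (a (k - i)) ^ 2) :
    (myC0 k a)ᵀ * myC0 k a = 1 := by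
  ext i j
  rw [Matrix.mul_apply]
  have L : ∀ l : Fin k, (myC0 k a)ᵀ i l * myC0 k a l j =
      if l = i.rev then myW k a (l:ℕ) * myC0 k a l j else 0 := fun l => by
    rw [Matrix.transpose_apply, myC0_apply', ite_mul, zero_mul]
  rw [Finset.sum_congr rfl (fun l _ => L l), Finset.sum_ite_eq']
  simp only [Finset.mem_univ, if_true]
  rw [myC0_apply']
  by_cases hij : i = j
  · subst hij
    rw [if_pos rfl, Matrix.one_apply_eq]
    exact myW_sq k a hnz ha _ (by have := (Fin.rev i).isLt; omega)
  · rw [if_neg (fun h => hij (by rwa [← Fin.rev_inj])), Matrix.one_apply_ne hij, mul_zero]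

lemma myComm (k : ℕ) (hk : 2 ≤ k) (a : ℕ → ℝ)
    (hnz : ∀ i : ℕ, i ≤ k - 1 → a i ≠ 0)
    (ha : ∀ i : ℕ, 1 ≤ i → i ≤ k - 1 → (a i) ^ 2 = (a (k - i)) ^ 2) :
    myC0 k a * myB k a = (myB k a)ᵀ * myC0 k a := by
  ext i j
  rw [Matrix.mul_apply, Matrix.mul_apply]
  have L : ∀ l : Fin k, myC0 k a i l * myB k a l j =
      if l = i.rev then myW k a (i:ℕ) * myB k a l j else 0 := fun l => by
    rw [myC0_apply, ite_mul, zero_mul]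
  have R : ∀ l : Fin k, (myB k a)ᵀ i l * myC0 k a l j =
      if l = j.rev then myB k a l i * myW k a (l:ℕ) else 0 := fun l => by
    rw [Matrix.transpose_apply, myC0_apply', mul_ite, mul_zero]
  rw [Finset.sum_congr rfl (fun l _ => L l), Finset.sum_congr rfl (fun l _ => R l),
    Finset.sum_ite_eq', Finset.sum_ite_eq']
  simp only [Finset.mem_univ, if_true, myB, Matrix.of_apply, Fin.val_rev]
  have hi := i.isLt; have hj := j.isLt
  split_ifs <;> try (first | omega | ring)
  · have e1 : (i:ℕ) = 0 := by omega
    have e2 : k - (1 + (j:ℕ)) = k - 1 := by omega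
    rw [e1, e2, myW_zero, myW_top k a hnz]
    ring
  · have e1 : 1 + (k - (1 + (i:ℕ))) = k - (i:ℕ) := by omega
    have e2 : 1 + (k - (1 + (j:ℕ))) = (i:ℕ) := by omega
    have e3 : k - (1 + (j:ℕ)) = (i:ℕ) - 1 := by omega
    rw [e1, e2, e3]
    have := myW_rec k a hnz (i:ℕ) (by omega) (by omega)
    linarith [this]

lemma myDiag (k : ℕ) (hk : 2 ≤ k) (a b : ℕ → ℝ)
    (hb : ∀ i : ℕ, 1 ≤ i → i ≤ k → b i + b (k + 1 - i) = 0) :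
    myC0 k a * Matrix.diagonal (fun i : Fin k => b ((i:ℕ) + 1)) =
      (-(Matrix.diagonal (fun i : Fin k => b ((i:ℕ) + 1)))) * myC0 k a := by
  ext i j
  rw [Matrix.mul_diagonal, Matrix.neg_mul, Matrix.neg_apply, Matrix.diagonal_mul, myC0_apply]
  by_cases h : j = i.rev
  · subst h
    rw [if_pos rfl]
    have hi := i.isLt
    have key : b ((i.rev : ℕ) + 1) = -b ((i:ℕ) + 1) := by
      have := hb ((i:ℕ) + 1) (by omega) (by omega)
      rw [Fin.val_rev, show k - ((i:ℕ)+1) + 1 = k + 1 - ((i:ℕ)+1) by omega]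
      linarith
    rw [key]; ring
  · rw [if_neg h, zero_mul, mul_zero, neg_zero]


/-- The matrix `T₁ + iT₂ = a₀E_{k,1} + ∑_{i=1}^{k-1} aᵢ E_{i,i+1}` (0-based indices). -/
def sutcliffeB (k : ℕ) (a : ℕ → ℝ) : Matrix (Fin k) (Fin k) ℂ :=
  Matrix.of fun i j =>
    (if (i : ℕ) = k - 1 ∧ (j : ℕ) = 0 then (a 0 : ℂ) else 0) +
    (if (j : ℕ) = (i : ℕ) + 1 then (a ((i : ℕ) + 1) : ℂ) else 0)

/-- `T₁ = ((T₁+iT₂) - (T₁+iT₂)†)/2`. -/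
noncomputable def sutcliffeT1 (k : ℕ) (a : ℕ → ℝ) : Matrix (Fin k) (Fin k) ℂ :=
  (2 : ℂ)⁻¹ • (sutcliffeB k a - (sutcliffeB k a)ᴴ)

/-- `T₂ = ((T₁+iT₂) + (T₁+iT₂)†)/(2i)`. -/
noncomputable def sutcliffeT2 (k : ℕ) (a : ℕ → ℝ) : Matrix (Fin k) (Fin k) ℂ :=
  (2 * Complex.I)⁻¹ • (sutcliffeB k a + (sutcliffeB k a)ᴴ)

/-- `T₃ = -(i/2) diag(b₁, …, b_k)` (0-based: entry `i` is `b_{i+1}`). -/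
noncomputable def sutcliffeT3 (k : ℕ) (b : ℕ → ℝ) : Matrix (Fin k) (Fin k) ℂ :=
  (-(Complex.I / 2)) • Matrix.diagonal fun i : Fin k => (b ((i : ℕ) + 1) : ℂ)


lemma myMapH (k : ℕ) (M : Matrix (Fin k) (Fin k) ℝ) :
    (M.map (Complex.ofRealHom : ℝ →+* ℂ))ᴴ = Mᵀ.map (Complex.ofRealHom : ℝ →+* ℂ) := by
  ext i j
  simp [Matrix.conjTranspose_apply, Matrix.map_apply, Complex.conj_ofReal]

/-- Under the folding constraints `aᵢ² = a_{k-i}²`, `bᵢ + b_{k+1-i} = 0`, the Sutcliffe-ansatz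
Nahm data is invariant under the rotation `diag(-1, 1, -1)`, implemented by conjugation by a
constant antidiagonal matrix `C ∈ SU(k)`. -/
theorem dihedral_invariance_of_nahm_data (k : ℕ) (hk : 2 ≤ k) (a b : ℕ → ℝ)
    (hnz : ∀ i : ℕ, i ≤ k - 1 → a i ≠ 0)
    (ha : ∀ i : ℕ, 1 ≤ i → i ≤ k - 1 → (a i) ^ 2 = (a (k - i)) ^ 2)
    (hb : ∀ i : ℕ, 1 ≤ i → i ≤ k → b i + b (k + 1 - i) = 0) :
    ∃ C : Matrix (Fin k) (Fin k) ℂ,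
      (∃ v : Fin k → ℂ,
        C = Matrix.of fun (i j : Fin k) => if (j : ℕ) = k - 1 - (i : ℕ) then v i else 0) ∧
      Cᴴ * C = 1 ∧ C.det = 1 ∧
      C * sutcliffeT1 k a * C⁻¹ = -sutcliffeT1 k a ∧
      C * sutcliffeT2 k a * C⁻¹ = sutcliffeT2 k a ∧
      C * sutcliffeT3 k b * C⁻¹ = -sutcliffeT3 k b := by
  set W := myW k a with hW
  set C0 := myC0 k a with hC0def
  set Cc : Matrix (Fin k) (Fin k) ℂ := C0.map (Complex.ofRealHom : ℝ →+* ℂ) with hCc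
  have hOrt : C0ᵀ * C0 = 1 := myOrtho k a hnz ha
  have hOrt2 : C0 * C0ᵀ = 1 := mul_eq_one_comm.mp hOrt
  have hComm : C0 * myB k a = (myB k a)ᵀ * C0 := myComm k hk a hnz ha
  have hComm2 : C0 * (myB k a)ᵀ = myB k a * C0 := by
    have h := congrArg Matrix.transpose hComm
    rw [Matrix.transpose_mul, Matrix.transpose_mul, Matrix.transpose_transpose] at h
    calc C0 * (myB k a)ᵀ
        = C0 * (myB k a)ᵀ * (C0ᵀ * C0) := by rw [hOrt, Matrix.mul_one]
      _ = C0 * ((myB k a)ᵀ * C0ᵀ) * C0 := by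
          rw [Matrix.mul_assoc, Matrix.mul_assoc, Matrix.mul_assoc]
      _ = C0 * (C0ᵀ * myB k a) * C0 := by rw [h]
      _ = C0 * C0ᵀ * (myB k a * C0) := by
          rw [Matrix.mul_assoc, Matrix.mul_assoc, Matrix.mul_assoc]
      _ = myB k a * C0 := by rw [hOrt2, Matrix.one_mul]
  set d := C0.det with hd
  have hdd : d * d = 1 := by
    have h := congrArg Matrix.det hOrt
    rwa [Matrix.det_mul, Matrix.det_transpose, Matrix.det_one] at h
  obtain ⟨c, hc1, hck⟩ : ∃ c : ℂ, (starRingEnd ℂ) c * c = 1 ∧ c ^ k * (d : ℂ) = 1 := by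
    rcases mul_self_eq_one_iff.mp hdd with h | h
    · exact ⟨1, by simp, by rw [h]; simp⟩
    · refine ⟨Complex.exp ((Real.pi / k : ℝ) * Complex.I), ?_, ?_⟩
      · rw [mul_comm, Complex.mul_conj, Complex.normSq_eq_norm_sq,
          Complex.norm_exp_ofReal_mul_I]
        norm_num
      · rw [h, ← Complex.exp_nat_mul]
        have hk0 : (k : ℂ) ≠ 0 := Nat.cast_ne_zero.mpr (by omega)
        have he : (k : ℂ) * ((Real.pi / k : ℝ) * Complex.I) = (Real.pi : ℂ) * Complex.I := by
          push_cast
          field_simp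
        rw [he, Complex.exp_pi_mul_I]
        norm_num
  have hCH : (c • Cc)ᴴ = (starRingEnd ℂ) c • (C0ᵀ.map (Complex.ofRealHom : ℝ →+* ℂ)) := by
    rw [Matrix.conjTranspose_smul, hCc, myMapH]
    rfl
  have hU1 : (c • Cc)ᴴ * (c • Cc) = 1 := by
    rw [hCH, Matrix.smul_mul, Matrix.mul_smul, smul_smul, hc1, one_smul, hCc,
      ← Matrix.map_mul, hOrt, Matrix.map_one _ (map_zero _) (map_one _)]
  have hU2 : (c • Cc) * (c • Cc)ᴴ = 1 := by
    rw [hCH, Matrix.smul_mul, Matrix.mul_smul, smul_smul, mul_comm c, hc1, one_smul, hCc,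
      ← Matrix.map_mul, hOrt2, Matrix.map_one _ (map_zero _) (map_one _)]
  have hinv : (c • Cc)⁻¹ = (c • Cc)ᴴ := Matrix.inv_eq_right_inv hU2
  have hB : sutcliffeB k a = (myB k a).map (Complex.ofRealHom : ℝ →+* ℂ) := by
    ext i j
    simp only [sutcliffeB, myB, Matrix.map_apply, Matrix.of_apply, map_add,
      apply_ite (Complex.ofRealHom : ℝ →+* ℂ), map_zero, Complex.ofRealHom_eq_coe]
  have hBH : (sutcliffeB k a)ᴴ = ((myB k a)ᵀ).map (Complex.ofRealHom : ℝ →+* ℂ) := by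
    rw [hB, myMapH]
  have hmain : (c • Cc) * sutcliffeB k a = (sutcliffeB k a)ᴴ * (c • Cc) := by
    rw [hBH, hB, Matrix.smul_mul, Matrix.mul_smul, hCc, ← Matrix.map_mul, ← Matrix.map_mul,
      hComm]
  have hmain2 : (c • Cc) * (sutcliffeB k a)ᴴ = sutcliffeB k a * (c • Cc) := by
    rw [hBH, hB, Matrix.smul_mul, Matrix.mul_smul, hCc, ← Matrix.map_mul, ← Matrix.map_mul,
      hComm2]
  have hBc : (c • Cc) * sutcliffeB k a * (c • Cc)ᴴ = (sutcliffeB k a)ᴴ := by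
    rw [hmain, Matrix.mul_assoc, hU2, Matrix.mul_one]
  have hBHc : (c • Cc) * (sutcliffeB k a)ᴴ * (c • Cc)ᴴ = sutcliffeB k a := by
    rw [hmain2, Matrix.mul_assoc, hU2, Matrix.mul_one]
  have hDc : Matrix.diagonal (fun i : Fin k => ((b ((i : ℕ) + 1) : ℝ) : ℂ)) =
      (Matrix.diagonal fun i : Fin k => b ((i : ℕ) + 1)).map
        (Complex.ofRealHom : ℝ →+* ℂ) := by
    rw [Matrix.diagonal_map (map_zero _)]
    rfl
  have hD : (c • Cc) * Matrix.diagonal (fun i : Fin k => ((b ((i : ℕ) + 1) : ℝ) : ℂ)) =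
      (-(Matrix.diagonal fun i : Fin k => ((b ((i : ℕ) + 1) : ℝ) : ℂ))) * (c • Cc) := by
    rw [hDc, Matrix.smul_mul, Matrix.mul_smul, hCc, ← Matrix.map_mul,
      myDiag k hk a b hb, Matrix.map_mul]
    have hneg : ((-(Matrix.diagonal fun i : Fin k => b ((i:ℕ)+1))).map
        (Complex.ofRealHom : ℝ →+* ℂ)) =
        -((Matrix.diagonal fun i : Fin k => b ((i:ℕ)+1)).map
          (Complex.ofRealHom : ℝ →+* ℂ)) := by
      ext i j
      by_cases h : i = j <;> simp [h]
    rw [hneg]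
  refine ⟨c • Cc, ⟨fun i => c * (W (i : ℕ) : ℂ), ?_⟩, hU1, ?_, ?_, ?_, ?_⟩
  · ext i j
    simp only [Matrix.smul_apply, hCc, Matrix.map_apply, hC0def, myC0, Matrix.of_apply, ← hW,
      smul_eq_mul, apply_ite (Complex.ofRealHom : ℝ →+* ℂ), map_zero, mul_ite, mul_zero]
    rfl
  · have hdet : Cc.det = ((d : ℝ) : ℂ) := by
      have h := (RingHom.map_det (Complex.ofRealHom) (myC0 k a)).symm
      rw [RingHom.mapMatrix_apply] at h
      rw [hCc, hC0def, hd, hC0def]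
      simpa using h
    rw [Matrix.det_smul, Fintype.card_fin, hdet]
    exact hck
  · rw [hinv, sutcliffeT1, Matrix.mul_smul, Matrix.smul_mul, Matrix.mul_sub, Matrix.sub_mul,
      hBc, hBHc, ← smul_neg, neg_sub]
  · rw [hinv, sutcliffeT2, Matrix.mul_smul, Matrix.smul_mul, Matrix.mul_add, Matrix.add_mul,
      hBc, hBHc, add_comm ((sutcliffeB k a)ᴴ)]
  · rw [hinv, sutcliffeT3, Matrix.mul_smul, Matrix.smul_mul, hD, Matrix.mul_assoc,
      Matrix.neg_mul, hU2, Matrix.mul_one, ← smul_neg]
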